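/- The function N ↦ Σ_{i=0}^{q} C(N,i)·ε̄^i·(1−ε̄)^{N−i} is (eventually) monotonically decreasing in N for N ≥ q/ε̄, for fixed q ∈ ℕ and ε̄ ∈ (0,1). -/
import Mathlib

lemma binomial_tail_step (ε : ℝ) (N : ℕ) : ∀ q : ℕ,
    ∑ i ∈ Finset.range (q + 1), ((N + 1).choose i : ℝ) * ε ^ i * (1 - ε) ^ (N + 1 - i)
      = ∑ i ∈ Finset.range (q + 1), (N.choose i : ℝ) * ε ^ i * (1 - ε) ^ (N - i)
        - ε * ((N.choose q : ℝ) * ε ^ q * (1 - ε) ^ (N - q)) := by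
  intro q
  induction q with
  | zero => simp [pow_succ]; ring
  | succ q ih =>
    rw [Finset.sum_range_succ, Finset.sum_range_succ (f := fun i => (N.choose i : ℝ) * ε ^ i * (1 - ε) ^ (N - i)) (n := q + 1), ih]
    have hc : ((N + 1).choose (q + 1) : ℝ) = N.choose q + N.choose (q + 1) := by
      rw [Nat.choose_succ_succ']; push_cast; ring
    have hexp : N + 1 - (q + 1) = N - q := by omega
    rw [hexp, hc]
    by_cases h : q + 1 ≤ N
    · have h2 : N - q = (N - (q + 1)) + 1 := by omega
      rw [h2]
      ring
    · have h1 : (N.choose (q + 1) : ℝ) = 0 := by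
        norm_cast
        exact Nat.choose_eq_zero_of_lt (by omega)
      have h2 : N - q = 0 := by omega
      have h3 : N - (q + 1) = 0 := by omega
      rw [h1, h2, h3]
      ring

/-- The binomial tail sum `N ↦ Σ_{i=0}^q C(N,i) ε̄^i (1−ε̄)^{N−i}` is
monotonically decreasing in `N` for `N ≥ q/ε̄`. -/
theorem binomial_tail_monotone
    (εb : ℝ) (hεb : εb ∈ Set.Ioo (0:ℝ) 1) (q : ℕ) :
    ∀ N : ℕ, (q : ℝ) / εb ≤ N →
      ∑ i ∈ Finset.range (q + 1),
          ((N + 1).choose i : ℝ) * εb ^ i * (1 - εb) ^ (N + 1 - i)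
        ≤ ∑ i ∈ Finset.range (q + 1),
            (N.choose i : ℝ) * εb ^ i * (1 - εb) ^ (N - i) := by
  intro N _
  rw [binomial_tail_step]
  have h1 : (0:ℝ) ≤ εb := le_of_lt hεb.1
  have h2 : (0:ℝ) ≤ 1 - εb := by linarith [hεb.2]
  have : 0 ≤ εb * ((N.choose q : ℝ) * εb ^ q * (1 - εb) ^ (N - q)) := by positivity
  linarith
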